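/- arXiv:2009.01882 — 5 statements merged into one kernel-verified Lean document; each statement's English description precedes it below -/
import Mathlib

section
/- For a compactly supported probability measure μ on ℝ with Cauchy transform G, and any z in the upper half-plane, the quantity (G(z) − G(w̄))/(z − w̄) + G(z)G(w̄) equals minus the integral ∫ f(x)·(1/(z−x) − G(z))·(1/(w̄−x) − G(w̄)) dμ(x); consequently the kernel (z,w) ↦ (G(z)−G(w̄))/(z−w̄) + G(z)G(w̄) on (ℂ∖ℝ)² is negative semi-definite: for all z₁,…,zₙ ∈ ℂ∖ℝ and c₁,…,cₙ ∈ ℂ, Σⱼₖ cⱼ c̄ₖ [(G(zⱼ)−G(z̄ₖ))/(zⱼ−z̄ₖ) + G(zⱼ)G(z̄ₖ)] ≤ 0. -/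
/-!
Off the real axis the resolvents `x ↦ (z - x)⁻¹` are bounded, so `G` is differentiable there
with `G' z = -∫ (z - x)⁻²`, and the resolvent identity gives
`(G z - G w) / (z - w) = -∫ (z - x)⁻¹ (w - x)⁻¹`. In both branches the kernel is therefore minus
the covariance of the two resolvents under `μ`. Since `G (conj z) = conj (G z)`, the quadratic
form `∑ cⱼ c̄ₖ ker zⱼ (conj zₖ)` is `-∫ |∑ cⱼ ((zⱼ - x)⁻¹ - G zⱼ)|² dμ`.
-/

open MeasureTheory Complex Metric ComplexConjugate

noncomputable def cauchyTransform (μ : Measure ℝ) (z : ℂ) : ℂ :=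
  ∫ x : ℝ, (z - (x : ℂ))⁻¹ ∂μ

noncomputable def resolventKernel (G : ℂ → ℂ) (z w : ℂ) : ℂ :=
  if z = w then deriv G z + G z * G z else (G z - G w) / (z - w) + G z * G w

theorem integral_sub_integral_mul_sub_integral {α 𝕜 : Type*} [RCLike 𝕜] [MeasurableSpace α]
    {μ : Measure α} [IsProbabilityMeasure μ] {f g : α → 𝕜} (hf : Integrable f μ)
    (hg : Integrable g μ) (hfg : Integrable (fun x => f x * g x) μ) :
    ∫ x, (f x - ∫ y, f y ∂μ) * (g x - ∫ y, g y ∂μ) ∂μ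
      = ∫ x, f x * g x ∂μ - (∫ x, f x ∂μ) * ∫ x, g x ∂μ := by
  set a := ∫ y, f y ∂μ
  set b := ∫ y, g y ∂μ
  have expand : ∀ x, (f x - a) * (g x - b) = f x * g x - (b * f x + a * g x - a * b) :=
    fun x => by ring
  have hlin : Integrable (fun x => b * f x + a * g x) μ :=
    (hf.const_mul b).add (hg.const_mul a)
  have hrest : Integrable (fun x => b * f x + a * g x - a * b) μ := hlin.sub (integrable_const _)
  simp_rw [expand]
  rw [integral_sub hfg hrest, integral_sub hlin (integrable_const _),
    integral_add (hf.const_mul b) (hg.const_mul a), integral_const_mul, integral_const_mul,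
    integral_const, probReal_univ, one_smul]
  ring

theorem sum_sum_mul_conj_mul_integral_eq_integral_norm_sq {α ι 𝕜 : Type*} [RCLike 𝕜]
    [MeasurableSpace α] {μ : Measure α} [Fintype ι] {f : ι → α → 𝕜}
    (hf : ∀ j k, Integrable (fun x => f j x * conj (f k x)) μ) (c : ι → 𝕜) :
    ∑ j, ∑ k, c j * conj (c k) * ∫ x, f j x * conj (f k x) ∂μ
      = ((∫ x, ‖∑ j, c j * f j x‖ ^ 2 ∂μ : ℝ) : 𝕜) := by
  have hsum : ∀ x, (‖∑ j, c j * f j x‖ : 𝕜) ^ 2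
      = ∑ j, ∑ k, c j * conj (c k) * (f j x * conj (f k x)) := by
    intro x
    rw [← RCLike.mul_conj, map_sum, Finset.sum_mul_sum]
    simp only [map_mul]
    refine Finset.sum_congr rfl fun j _ => Finset.sum_congr rfl fun k _ => ?_
    ring
  simp_rw [← integral_ofReal, RCLike.ofReal_pow, hsum]
  rw [integral_finsetSum _ fun j _ => integrable_finsetSum _ fun k _ => (hf j k).const_mul _]
  simp_rw [integral_finsetSum _ fun k _ => (hf _ k).const_mul _, integral_const_mul]

section Resolvent

variable {z w : ℂ}

theorem sub_ofReal_ne_zero (hz : z.im ≠ 0) (x : ℝ) : z - x ≠ 0 := fun h => hz (by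
  simpa using congrArg im h)

theorem norm_inv_sub_ofReal_le (hz : z.im ≠ 0) (x : ℝ) : ‖(z - x)⁻¹‖ ≤ |z.im|⁻¹ := by
  rw [norm_inv]
  exact inv_anti₀ (abs_pos.2 hz) (by simpa using abs_im_le_norm (z - x))

theorem continuous_inv_sub_ofReal (hz : z.im ≠ 0) : Continuous fun x : ℝ => (z - x)⁻¹ :=
  (continuous_const.sub continuous_ofReal).inv₀ (sub_ofReal_ne_zero hz)

theorem half_abs_im_le_abs_im_of_mem_ball (hw : w ∈ ball z (|z.im| / 2)) :
    |z.im| / 2 ≤ |w.im| := by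
  rw [mem_ball, dist_comm, dist_eq_norm] at hw
  have hdist : |z.im - w.im| < |z.im| / 2 := by
    simpa using (abs_im_le_norm (z - w)).trans_lt hw
  linarith [abs_sub_abs_le_abs_sub z.im w.im]

theorem conj_inv_sub_ofReal (x : ℝ) : conj ((z - x)⁻¹) = (conj z - x)⁻¹ := by
  simp

variable {μ : Measure ℝ}

theorem integrable_inv_sub_ofReal [IsFiniteMeasure μ] (hz : z.im ≠ 0) :
    Integrable (fun x : ℝ => (z - x)⁻¹) μ :=
  Integrable.of_bound (continuous_inv_sub_ofReal hz).aestronglyMeasurable |z.im|⁻¹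
    (.of_forall (norm_inv_sub_ofReal_le hz))

theorem integrable_inv_sub_ofReal_sub_mul (hz : z.im ≠ 0) (a : ℂ) {g : ℝ → ℂ}
    (hg : Integrable g μ) : Integrable (fun x : ℝ => ((z - x)⁻¹ - a) * g x) μ :=
  hg.bdd_mul ((continuous_inv_sub_ofReal hz).sub continuous_const).aestronglyMeasurable
    (.of_forall fun x => (norm_sub_le _ _).trans (add_le_add_left (norm_inv_sub_ofReal_le hz x) _))

theorem cauchyTransform_conj (z : ℂ) :
    cauchyTransform μ (conj z) = conj (cauchyTransform μ z) := by
  simp only [cauchyTransform, ← integral_conj, ← conj_inv_sub_ofReal]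

theorem hasDerivAt_cauchyTransform [IsFiniteMeasure μ] (hz : z.im ≠ 0) :
    HasDerivAt (cauchyTransform μ) (-∫ x : ℝ, ((z - x)⁻¹) ^ 2 ∂μ) z := by
  have hr : 0 < |z.im| / 2 := by positivity
  have him_ne (w) (hw : w ∈ ball z (|z.im| / 2)) : w.im ≠ 0 :=
    abs_pos.1 (hr.trans_le (half_abs_im_le_abs_im_of_mem_ball hw))
  rw [← integral_neg]
  refine (hasDerivAt_integral_of_dominated_loc_of_deriv_le (ball_mem_nhds z hr)
    (F := fun (w : ℂ) (x : ℝ) => (w - x)⁻¹) (F' := fun (w : ℂ) (x : ℝ) => -((w - x)⁻¹) ^ 2)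
    (bound := fun _ => ((|z.im| / 2)⁻¹) ^ 2) ?_ (integrable_inv_sub_ofReal hz)
    ?_ ?_ (integrable_const _) ?_).2
  · exact Filter.eventually_of_mem (ball_mem_nhds z hr) fun w hw =>
      (continuous_inv_sub_ofReal (him_ne w hw)).aestronglyMeasurable
  · exact ((continuous_inv_sub_ofReal hz).pow 2).neg.aestronglyMeasurable
  · refine .of_forall fun x w hw => ?_
    rw [norm_neg, norm_pow]
    gcongr
    exact (norm_inv_sub_ofReal_le (him_ne w hw) x).trans
      (inv_anti₀ hr (half_abs_im_le_abs_im_of_mem_ball hw))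
  · exact .of_forall fun x w hw => (((hasDerivAt_id w).sub_const (x : ℂ)).inv
      (sub_ofReal_ne_zero (him_ne w hw) x)).congr_deriv (by rw [neg_div, one_div, inv_pow, id])

theorem cauchyTransform_sub_div_sub [IsFiniteMeasure μ] (hz : z.im ≠ 0) (hw : w.im ≠ 0)
    (hzw : z ≠ w) :
    (cauchyTransform μ z - cauchyTransform μ w) / (z - w)
      = -∫ x : ℝ, (z - x)⁻¹ * (w - x)⁻¹ ∂μ := by
  have resolvent_identity (x : ℝ) :
      (z - x)⁻¹ - (w - x)⁻¹ = (w - z) * ((z - x)⁻¹ * (w - x)⁻¹) := by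
    field_simp [sub_ofReal_ne_zero hz x, sub_ofReal_ne_zero hw x]
    ring
  rw [cauchyTransform, cauchyTransform, ← integral_sub (integrable_inv_sub_ofReal hz)
    (integrable_inv_sub_ofReal hw)]
  simp_rw [resolvent_identity, integral_const_mul]
  field_simp [sub_ne_zero.2 hzw]
  ring

theorem resolventKernel_cauchyTransform [IsProbabilityMeasure μ] (hz : z.im ≠ 0)
    (hw : w.im ≠ 0) :
    resolventKernel (cauchyTransform μ) z w
      = -∫ x : ℝ,
          ((z - x)⁻¹ - cauchyTransform μ z) * ((w - x)⁻¹ - cauchyTransform μ w) ∂μ := by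
  have hprod : Integrable (fun x : ℝ => (z - x)⁻¹ * (w - x)⁻¹) μ := by
    simpa using integrable_inv_sub_ofReal_sub_mul hz 0 (integrable_inv_sub_ofReal (μ := μ) hw)
  rw [cauchyTransform, cauchyTransform, integral_sub_integral_mul_sub_integral
    (integrable_inv_sub_ofReal hz) (integrable_inv_sub_ofReal hw) hprod, ← cauchyTransform,
    ← cauchyTransform, resolventKernel]
  split_ifs with hzw
  · subst hzw
    rw [(hasDerivAt_cauchyTransform hz).deriv]
    simp_rw [sq]
    ring
  · rw [cauchyTransform_sub_div_sub hz hw hzw]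
    ring

end Resolvent

theorem resolvent_kernel_negSemidef_general
    (μ : Measure ℝ) [IsProbabilityMeasure μ]
    (G : ℂ → ℂ) (hG : ∀ z : ℂ, G z = ∫ x : ℝ, (z - (x : ℂ))⁻¹ ∂μ)
    (ker : ℂ → ℂ → ℂ)
    (hker : ∀ z w : ℂ, ker z w =
      if z = w then deriv G z + G z * G z
      else (G z - G w) / (z - w) + G z * G w) :
    (∀ z w : ℂ, 0 < z.im → 0 < w.im →
      ker z (starRingEnd ℂ w)
        = - ∫ x : ℝ, ((z - (x : ℂ))⁻¹ - G z) *
            ((starRingEnd ℂ w - (x : ℂ))⁻¹ - G (starRingEnd ℂ w)) ∂μ)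
    ∧ (∀ (n : ℕ) (z : Fin n → ℂ) (c : Fin n → ℂ), (∀ j, (z j).im ≠ 0) →
        (∑ j : Fin n, ∑ k : Fin n,
            c j * starRingEnd ℂ (c k) * ker (z j) (starRingEnd ℂ (z k))).re ≤ 0
        ∧ (∑ j : Fin n, ∑ k : Fin n,
            c j * starRingEnd ℂ (c k) * ker (z j) (starRingEnd ℂ (z k))).im = 0) := by
  obtain rfl : G = cauchyTransform μ := funext hG
  obtain rfl : ker = resolventKernel (cauchyTransform μ) := funext₂ hker
  have conj_im_ne {v : ℂ} (hv : v.im ≠ 0) : (conj v).im ≠ 0 := by simpa using hv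
  refine ⟨fun z w hz hw => resolventKernel_cauchyTransform hz.ne' (conj_im_ne hw.ne'),
    fun n z c hz => ?_⟩
  set f : Fin n → ℝ → ℂ := fun j x => (z j - x)⁻¹ - cauchyTransform μ (z j)
  have conj_f (k : Fin n) (x : ℝ) :
      conj (f k x) = (conj (z k) - x)⁻¹ - cauchyTransform μ (conj (z k)) := by
    simp only [f, map_sub, conj_inv_sub_ofReal, cauchyTransform_conj]
  have hf (j k : Fin n) : Integrable (fun x => f j x * conj (f k x)) μ := by
    simp only [conj_f]
    exact integrable_inv_sub_ofReal_sub_mul (hz j) _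
      ((integrable_inv_sub_ofReal (conj_im_ne (hz k))).sub (integrable_const _))
  have quadratic_form : ∑ j, ∑ k, c j * conj (c k) *
      resolventKernel (cauchyTransform μ) (z j) (conj (z k))
        = -∑ j, ∑ k, c j * conj (c k) * ∫ x, f j x * conj (f k x) ∂μ := by
    simp only [conj_f, resolventKernel_cauchyTransform (hz _) (conj_im_ne (hz _)), mul_neg,
      Finset.sum_neg_distrib]
    rfl
  rw [quadratic_form, sum_sum_mul_conj_mul_integral_eq_integral_norm_sq hf c]
  exact ⟨by simpa using integral_nonneg fun x => sq_nonneg ‖∑ j, c j * f j x‖, by simp⟩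

/-- The covariance-of-resolvents formula and negative semi-definiteness of the kernel
`(z,w) ↦ (G(z) − G(w̄))/(z − w̄) + G(z)G(w̄)`, with the removable singularity at `z = w̄`
interpreted as `G'(z) + G(z)²`. -/
theorem resolvent_kernel_negSemidef
    (μ : Measure ℝ) [IsProbabilityMeasure μ]
    (K : Set ℝ) (hK : IsCompact K) (hμK : μ Kᶜ = 0)
    (G : ℂ → ℂ) (hG : ∀ z : ℂ, G z = ∫ x : ℝ, (z - (x : ℂ))⁻¹ ∂μ)
    (ker : ℂ → ℂ → ℂ)
    (hker : ∀ z w : ℂ, ker z w =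
      if z = w then deriv G z + G z * G z
      else (G z - G w) / (z - w) + G z * G w) :
    (∀ z w : ℂ, 0 < z.im → 0 < w.im →
      ker z (starRingEnd ℂ w)
        = - ∫ x : ℝ, ((z - (x : ℂ))⁻¹ - G z) *
            ((starRingEnd ℂ w - (x : ℂ))⁻¹ - G (starRingEnd ℂ w)) ∂μ)
    ∧ (∀ (n : ℕ) (z : Fin n → ℂ) (c : Fin n → ℂ), (∀ j, (z j).im ≠ 0) →
        (∑ j : Fin n, ∑ k : Fin n,
            c j * starRingEnd ℂ (c k) * ker (z j) (starRingEnd ℂ (z k))).re ≤ 0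
        ∧ (∑ j : Fin n, ∑ k : Fin n,
            c j * starRingEnd ℂ (c k) * ker (z j) (starRingEnd ℂ (z k))).im = 0) :=
  resolvent_kernel_negSemidef_general μ G hG ker hker
end

section
/- If f is a compactly supported smooth function on ℝ with ∫ f(x)·xⁿ dx denoting its n-th moment, then for every n ≥ 0, ∫ Hf(y)·yⁿ·f(y) dy = (1/(2π)) Σ_{j=0}^{n−1} (∫ f(x)·xʲ dx)·(∫ f(y)·y^{n−1−j} dy). -/
open MeasureTheory Filter

section HilbertAux

lemma region_eq (y ε : ℝ) :
    {x : ℝ | ε < |y - x|} = Set.Iio (y - ε) ∪ Set.Ioi (y + ε) := by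
  ext x
  simp only [Set.mem_setOf_eq, Set.mem_union, Set.mem_Iio, Set.mem_Ioi, lt_abs]
  constructor
  · rintro (h | h)
    · left; linarith
    · right; linarith
  · rintro (h | h)
    · left; linarith
    · right; linarith

lemma region_meas (y ε : ℝ) : MeasurableSet {x : ℝ | ε < |y - x|} :=
  measurableSet_lt measurable_const ((measurable_const.sub measurable_id).abs)

lemma annulus_cancel (y ε : ℝ) (hε : 0 < ε) (hε1 : ε < 1) :
    (∫ x in Set.Ioo (y - 1) (y - ε), (y - x)⁻¹) +
      ∫ x in Set.Ioo (y + ε) (y + 1), (y - x)⁻¹ = 0 := by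
  have h1 : (∫ x in Set.Ioo (y - 1) (y - ε), (y - x)⁻¹) = Real.log (1 / ε) := by
    rw [← integral_Ioc_eq_integral_Ioo, ← intervalIntegral.integral_of_le (by linarith),
      intervalIntegral.integral_comp_sub_left (fun u => u⁻¹) y]
    have e1 : y - (y - ε) = ε := by ring
    have e2 : y - (y - 1) = 1 := by ring
    rw [e1, e2, integral_inv]
    intro hmem
    rw [Set.mem_uIcc] at hmem
    rcases hmem with ⟨h, _⟩ | ⟨_, h⟩ <;> linarith
  have h2 : (∫ x in Set.Ioo (y + ε) (y + 1), (y - x)⁻¹) = Real.log ε := by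
    rw [← integral_Ioc_eq_integral_Ioo, ← intervalIntegral.integral_of_le (by linarith),
      intervalIntegral.integral_comp_sub_left (fun u => u⁻¹) y]
    have e1 : y - (y + 1) = -1 := by ring
    have e2 : y - (y + ε) = -ε := by ring
    rw [e1, e2, integral_inv (by
      intro hmem
      rw [Set.mem_uIcc] at hmem
      rcases hmem with ⟨h, _⟩ | ⟨_, h⟩ <;> linarith)]
    norm_num
  rw [h1, h2, one_div, Real.log_inv]
  ring

lemma unif_bound {f : ℝ → ℝ} {L : NNReal} (hfc : Continuous f) (hL : LipschitzWith L f)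
    (hfi : Integrable f) (y ε : ℝ) (hε : 0 < ε) :
    ‖∫ x in {x : ℝ | ε < |y - x|}, f x / (y - x)‖ ≤ 2 * L + ∫ x, |f x| := by
  set S := {x : ℝ | ε < |y - x|} with hS
  have hSm : MeasurableSet S := region_meas y ε
  have hmeas : AEStronglyMeasurable (fun x => f x / (y - x)) :=
    ((hfc.measurable.div (measurable_const.sub measurable_id))).aestronglyMeasurable
  have habs : Integrable (fun x => |f x|) := hfi.abs
  have habsnn : 0 ≤ ∫ x, |f x| := integral_nonneg fun x => abs_nonneg _
  have hint : IntegrableOn (fun x => f x / (y - x)) S := by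
    refine Integrable.mono' ((habs.div_const ε).restrict) hmeas.restrict ?_
    refine (ae_restrict_iff' hSm).2 (ae_of_all _ fun x hx => ?_)
    have h1 : ε < |y - x| := hx
    rw [norm_div, Real.norm_eq_abs, Real.norm_eq_abs]
    gcongr <;> exact h1.le
  rcases le_or_gt 1 ε with h1 | h1
  · have step1 : ‖∫ x in S, f x / (y - x)‖ ≤ ∫ x in S, ‖f x / (y - x)‖ :=
      norm_integral_le_integral_norm _
    have step2 : (∫ x in S, ‖f x / (y - x)‖) ≤ ∫ x in S, |f x| := by
      refine setIntegral_mono_on hint.norm habs.restrict hSm fun x hx => ?_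
      have hx' : ε < |y - x| := hx
      rw [norm_div, Real.norm_eq_abs, Real.norm_eq_abs]
      exact div_le_self (abs_nonneg _) (by linarith)
    have step3 : (∫ x in S, |f x|) ≤ ∫ x, |f x| :=
      setIntegral_le_integral habs (ae_of_all _ fun x => abs_nonneg _)
    have hLnn : (0:ℝ) ≤ 2 * L := by positivity
    linarith
  · set A := Set.Ioo (y - 1) (y + 1) with hA
    have hAm : MeasurableSet A := measurableSet_Ioo
    have hsplit : (∫ x in S, f x / (y - x)) =
        (∫ x in S ∩ A, f x / (y - x)) + ∫ x in S \ A, f x / (y - x) :=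
      (integral_inter_add_diff hAm hint).symm
    have hSA : S ∩ A = Set.Ioo (y - 1) (y - ε) ∪ Set.Ioo (y + ε) (y + 1) := by
      rw [hS, region_eq, hA]
      ext x
      simp only [Set.mem_inter_iff, Set.mem_union, Set.mem_Iio, Set.mem_Ioi, Set.mem_Ioo]
      constructor
      · rintro ⟨h | h, h2, h3⟩
        · exact Or.inl ⟨h2, h⟩
        · exact Or.inr ⟨h, h3⟩
      · rintro (⟨h2, h3⟩ | ⟨h2, h3⟩)
        · exact ⟨Or.inl h3, h2, by linarith⟩
        · exact ⟨Or.inr h2, by linarith, h3⟩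
    have hSAsub : S ∩ A ⊆ A := Set.inter_subset_right
    have hSAfin : volume (S ∩ A) < ⊤ :=
      lt_of_le_of_lt (measure_mono hSAsub) (by rw [hA, Real.volume_Ioo]; exact ENNReal.ofReal_lt_top)
    haveI hfinA : IsFiniteMeasure (volume.restrict (S ∩ A)) :=
      ⟨by rwa [Measure.restrict_apply_univ]⟩
    -- pointwise decomposition
    have hptw : ∀ x : ℝ, f x / (y - x) = (f x - f y) / (y - x) + f y * (y - x)⁻¹ := by
      intro x
      rw [← div_eq_mul_inv, ← add_div, sub_add_cancel]
    -- bound L for difference quotient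
    have hbd1 : ∀ x ∈ S ∩ A, ‖(f x - f y) / (y - x)‖ ≤ (L : ℝ) := by
      intro x hx
      have hxy : ε < |y - x| := hx.1
      rw [norm_div, Real.norm_eq_abs, Real.norm_eq_abs, div_le_iff₀ (lt_trans hε hxy)]
      calc |f x - f y| = dist (f x) (f y) := (Real.dist_eq _ _).symm
        _ ≤ L * dist x y := hL.dist_le_mul x y
        _ = L * |y - x| := by rw [Real.dist_eq, abs_sub_comm]
    have hm1 : AEStronglyMeasurable (fun x => (f x - f y) / (y - x)) :=
      (((hfc.sub continuous_const).measurable).div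
        (measurable_const.sub measurable_id)).aestronglyMeasurable
    have hint1 : IntegrableOn (fun x => (f x - f y) / (y - x)) (S ∩ A) := by
      refine Integrable.mono' (integrable_const (L : ℝ)) hm1.restrict ?_
      exact (ae_restrict_iff' (hSm.inter hAm)).2 (ae_of_all _ hbd1)
    have hm2 : AEStronglyMeasurable (fun x : ℝ => (y - x)⁻¹) :=
      ((measurable_const.sub measurable_id).inv).aestronglyMeasurable
    have hint2 : IntegrableOn (fun x : ℝ => (y - x)⁻¹) (S ∩ A) := by
      refine Integrable.mono' (integrable_const ε⁻¹) hm2.restrict ?_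
      refine (ae_restrict_iff' (hSm.inter hAm)).2 (ae_of_all _ fun x hx => ?_)
      have hxy : ε < |y - x| := hx.1
      rw [Real.norm_eq_abs, abs_inv]
      exact inv_anti₀ hε hxy.le
    have hint2' : IntegrableOn (fun x : ℝ => f y * (y - x)⁻¹) (S ∩ A) :=
      hint2.const_mul _
    -- the cancellation
    have hcancel : (∫ x in S ∩ A, (y - x)⁻¹) = 0 := by
      rw [hSA, setIntegral_union ?disj measurableSet_Ioo ?i1 ?i2]
      case disj =>
        rw [Set.disjoint_left]
        rintro x ⟨_, hx2⟩ ⟨hx3, _⟩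
        linarith
      case i1 =>
        refine hint2.mono_set ?_
        rw [hSA]; exact Set.subset_union_left
      case i2 =>
        refine hint2.mono_set ?_
        rw [hSA]; exact Set.subset_union_right
      exact annulus_cancel y ε hε h1
    have hinner_eq : (∫ x in S ∩ A, f x / (y - x)) =
        ∫ x in S ∩ A, (f x - f y) / (y - x) := by
      calc (∫ x in S ∩ A, f x / (y - x))
          = ∫ x in S ∩ A, ((f x - f y) / (y - x) + f y * (y - x)⁻¹) := by
            exact integral_congr_ae (ae_of_all _ fun x => hptw x)
        _ = (∫ x in S ∩ A, (f x - f y) / (y - x)) + ∫ x in S ∩ A, f y * (y - x)⁻¹ :=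
            integral_add hint1 hint2'
        _ = (∫ x in S ∩ A, (f x - f y) / (y - x)) + f y * ∫ x in S ∩ A, (y - x)⁻¹ := by
            rw [integral_const_mul]
        _ = ∫ x in S ∩ A, (f x - f y) / (y - x) := by rw [hcancel, mul_zero, add_zero]
    have hinner_bd : ‖∫ x in S ∩ A, f x / (y - x)‖ ≤ 2 * L := by
      rw [hinner_eq]
      have := norm_setIntegral_le_of_norm_le_const hSAfin hbd1
      refine this.trans ?_
      have hv : (volume (S ∩ A)).toReal ≤ 2 := by
        have : volume (S ∩ A) ≤ ENNReal.ofReal 2 := by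
          refine (measure_mono hSAsub).trans ?_
          rw [hA, Real.volume_Ioo]
          exact le_of_eq (by norm_num)
        exact ENNReal.toReal_le_of_le_ofReal (by norm_num) this
      calc (L : ℝ) * (volume (S ∩ A)).toReal ≤ (L : ℝ) * 2 := by
            exact mul_le_mul_of_nonneg_left hv (by positivity)
        _ = 2 * L := by ring
    -- outer part
    have houter_bd : ‖∫ x in S \ A, f x / (y - x)‖ ≤ ∫ x, |f x| := by
      have hout : ∀ x ∈ S \ A, ‖f x / (y - x)‖ ≤ |f x| := by
        rintro x ⟨_, hx2⟩
        have h2 : (1:ℝ) ≤ |y - x| := by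
          rw [hA, Set.mem_Ioo, not_and_or, not_lt, not_lt] at hx2
          rcases hx2 with h | h
          · rw [abs_of_nonneg (by linarith)]; linarith
          · rw [abs_of_nonpos (by linarith)]; linarith
        rw [norm_div, Real.norm_eq_abs, Real.norm_eq_abs]
        exact div_le_self (abs_nonneg _) h2
      have hintd : IntegrableOn (fun x => f x / (y - x)) (S \ A) :=
        hint.mono_set Set.diff_subset
      calc ‖∫ x in S \ A, f x / (y - x)‖ ≤ ∫ x in S \ A, ‖f x / (y - x)‖ :=
            norm_integral_le_integral_norm _
        _ ≤ ∫ x in S \ A, |f x| := by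
            exact setIntegral_mono_on hintd.norm habs.restrict (hSm.diff hAm) hout
        _ ≤ ∫ x, |f x| := setIntegral_le_integral habs (ae_of_all _ fun x => abs_nonneg _)
    calc ‖∫ x in S, f x / (y - x)‖
        = ‖(∫ x in S ∩ A, f x / (y - x)) + ∫ x in S \ A, f x / (y - x)‖ := by rw [hsplit]
      _ ≤ ‖∫ x in S ∩ A, f x / (y - x)‖ + ‖∫ x in S \ A, f x / (y - x)‖ := norm_add_le _ _
      _ ≤ 2 * L + ∫ x, |f x| := add_le_add hinner_bd houter_bd

end HilbertAux

/-- Moment formula for the Hilbert transform: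
`∫ Hf(y) yⁿ f(y) dy = (1/2π) Σ_{j<n} (∫ f(x) xʲ dx)(∫ f(y) y^(n−1−j) dy)`. -/
theorem integral_hilbertTransform_mul_pow
    (f : ℝ → ℝ) (hf : ContDiff ℝ (⊤ : ℕ∞) f) (hsupp : HasCompactSupport f)
    (Hf : ℝ → ℝ)
    (hH : ∀ y : ℝ, Tendsto
      (fun ε : ℝ => (1 / Real.pi) * ∫ x in {x : ℝ | ε < |y - x|}, f x / (y - x))
      (nhdsWithin 0 (Set.Ioi 0)) (nhds (Hf y))) :
    ∀ n : ℕ, ∫ y : ℝ, Hf y * y ^ n * f y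
      = (1 / (2 * Real.pi)) * ∑ j ∈ Finset.range n,
          (∫ x : ℝ, f x * x ^ j) * (∫ y : ℝ, f y * y ^ (n - 1 - j)) := by
  intro n
  have hπ : (0:ℝ) < Real.pi := Real.pi_pos
  have hfc : Continuous f := hf.continuous
  have hfi : Integrable f := hfc.integrable_of_hasCompactSupport hsupp
  obtain ⟨L, hL⟩ : ∃ L : NNReal, LipschitzWith L f := by
    obtain ⟨Cd, hCd⟩ :=
      (hf.continuous_deriv (by simp)).bounded_above_of_compact_support hsupp.deriv
    refine ⟨Cd.toNNReal, lipschitzWith_of_nnnorm_deriv_le (hf.differentiable (by simp))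
      fun x => ?_⟩
    have h := (hCd x).trans (Real.le_coe_toNNReal Cd)
    exact_mod_cast h
  set C : ℝ := 2 * L + ∫ x, |f x| with hCdef
  -- the test function g y = y^n * f y
  set g : ℝ → ℝ := fun y => y ^ n * f y with hg
  have hgc : Continuous g := (continuous_pow n).mul hfc
  have hgi : Integrable g := hgc.integrable_of_hasCompactSupport (hsupp.mul_left)
  have hmom : ∀ m : ℕ, Integrable (fun x : ℝ => f x * x ^ m) := fun m =>
    (hfc.mul (continuous_pow m)).integrable_of_hasCompactSupport hsupp.mul_right
  -- the truncation sequence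
  set u : ℕ → ℝ := fun k => 1 / ((k : ℝ) + 1) with hu
  have hu_pos : ∀ k, 0 < u k := fun k => by positivity
  have hu_tend0 : Tendsto u atTop (nhds 0) := tendsto_one_div_add_atTop_nhds_zero_nat
  have hu_tend : Tendsto u atTop (nhdsWithin 0 (Set.Ioi 0)) :=
    tendsto_nhdsWithin_of_tendsto_nhds_of_eventually_within _ hu_tend0
      (Eventually.of_forall fun k => hu_pos k)
  -- the truncated Hilbert transform
  set φ : ℝ → ℝ → ℝ := fun ε y => ∫ x in {x : ℝ | ε < |y - x|}, f x / (y - x) with hφ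
  have hCbound : ∀ (y ε : ℝ), 0 < ε → ‖φ ε y‖ ≤ C :=
    fun y ε hε => unif_bound hfc hL hfi y ε hε
  -- the kernel on the product space
  set K : ℝ → ℝ × ℝ → ℝ :=
    fun ε p => if ε < |p.1 - p.2| then f p.2 / (p.1 - p.2) * g p.1 else 0 with hK
  have hKsm : ∀ ε : ℝ, StronglyMeasurable (K ε) := by
    intro ε
    apply Measurable.stronglyMeasurable
    refine Measurable.ite ?_ ?_ measurable_const
    · exact measurableSet_lt measurable_const ((measurable_fst.sub measurable_snd).abs)
    · exact ((hfc.measurable.comp measurable_snd).div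
        (measurable_fst.sub measurable_snd)).mul (hgc.measurable.comp measurable_fst)
  have hKint : ∀ ε : ℝ, 0 < ε → Integrable (K ε) (volume.prod volume) := by
    intro ε hε
    refine Integrable.mono' (Integrable.mul_prod hgi.abs (hfi.abs.div_const ε))
      (hKsm ε).aestronglyMeasurable (ae_of_all _ fun p => ?_)
    by_cases h : ε < |p.1 - p.2|
    · simp only [hK, if_pos h]
      rw [Real.norm_eq_abs, abs_mul, abs_div, mul_comm]
      gcongr <;> first | exact hε.le | exact h.le
    · simp only [hK, if_neg h, norm_zero]
      positivity
  -- inner integral computation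
  have hinner : ∀ ε y : ℝ, (∫ x, K ε (y, x)) = φ ε y * g y := by
    intro ε y
    have heq : ∀ x : ℝ, K ε (y, x) =
        Set.indicator {x : ℝ | ε < |y - x|} (fun x => f x / (y - x) * g y) x := by
      intro x
      rw [Set.indicator_apply]
      simp only [hK, Set.mem_setOf_eq]
    rw [integral_congr_ae (ae_of_all _ heq), integral_indicator (region_meas y ε),
      integral_mul_const]
  -- first DCT: LHS as limit of truncated integrals
  have hDCT1 : Tendsto (fun k => ∫ y, (1 / Real.pi * φ (u k) y) * g y) atTop
      (nhds (∫ y, Hf y * y ^ n * f y)) := by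
    refine tendsto_integral_of_dominated_convergence
      (fun y => 1 / Real.pi * C * |g y|) ?_ ((hgi.abs.const_mul _)) ?_ ?_
    · intro k
      have hm : StronglyMeasurable fun y => ∫ x, K (u k) (y, x) :=
        (hKsm (u k)).integral_prod_right'
      have heqf : (fun y => (1 / Real.pi * φ (u k) y) * g y)
          = fun y => 1 / Real.pi * ∫ x, K (u k) (y, x) := by
        funext y; rw [hinner]; ring
      rw [heqf]
      exact (hm.const_mul _).aestronglyMeasurable
    · intro k
      refine ae_of_all _ fun y => ?_
      rw [Real.norm_eq_abs, abs_mul, abs_mul]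
      have h1 : |φ (u k) y| ≤ C := by
        have := hCbound y (u k) (hu_pos k)
        rwa [Real.norm_eq_abs] at this
      have h2 : |1 / Real.pi| = 1 / Real.pi := abs_of_pos (by positivity)
      rw [h2]
      exact mul_le_mul_of_nonneg_right
        (mul_le_mul_of_nonneg_left h1 (by positivity)) (abs_nonneg _)
    · refine ae_of_all _ fun y => ?_
      have h := ((hH y).comp hu_tend).mul_const (g y)
      have hgoal : Hf y * g y = Hf y * y ^ n * f y := by rw [hg]; ring
      rw [hgoal] at h
      exact h
  -- symmetrization identity
  have hsym : ∀ ε : ℝ, 0 < ε → ∀ p : ℝ × ℝ, K ε p + K ε p.swap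
      = if ε < |p.1 - p.2| then
          f p.2 * f p.1 * ∑ j ∈ Finset.range n, p.2 ^ j * p.1 ^ (n - 1 - j) else 0 := by
    intro ε hε p
    obtain ⟨y, x⟩ := p
    simp only [hK, Prod.swap_prod_mk]
    rw [abs_sub_comm x y]
    by_cases h : ε < |y - x|
    · rw [if_pos h, if_pos h, if_pos h]
      have hxy : y - x ≠ 0 := by
        intro h0
        rw [h0, abs_zero] at h
        exact absurd h (not_lt.2 hε.le)
      have hxy' : x - y ≠ 0 := fun h0 => hxy (by linarith [sub_eq_zero.1 h0])
      have key : (∑ j ∈ Finset.range n, x ^ j * y ^ (n - 1 - j)) * (x - y)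
          = x ^ n - y ^ n := geom_sum₂_mul x y n
      simp only [hg]
      have expand : f x / (y - x) * (y ^ n * f y) + f y / (x - y) * (x ^ n * f x)
          = (f x * f y * (y ^ n - x ^ n)) / (y - x) := by
        field_simp
        ring
      rw [expand, div_eq_iff hxy]
      linear_combination (f x * f y) * key
    · rw [if_neg h, if_neg h, if_neg h, add_zero]
  -- the limit integrand on the product space
  set Pf : ℝ × ℝ → ℝ :=
    fun p => f p.2 * f p.1 * ∑ j ∈ Finset.range n, p.2 ^ j * p.1 ^ (n - 1 - j) with hPf
  have hPfeq : Pf = fun p => ∑ j ∈ Finset.range n,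
      (f p.1 * p.1 ^ (n - 1 - j)) * (f p.2 * p.2 ^ j) := by
    funext p
    simp only [hPf]
    rw [Finset.mul_sum]
    exact Finset.sum_congr rfl fun j _ => by ring
  have hPfint : Integrable Pf (volume.prod volume) := by
    rw [hPfeq]
    exact integrable_finset_sum _ fun j _ => Integrable.mul_prod (hmom _) (hmom _)
  have hPfval : (∫ p, Pf p ∂(volume.prod volume))
      = ∑ j ∈ Finset.range n, (∫ x, f x * x ^ j) * (∫ x, f x * x ^ (n - 1 - j)) := by
    simp only [hPfeq]
    rw [integral_finset_sum _ (fun j _ => Integrable.mul_prod (hmom _) (hmom _))]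
    refine Finset.sum_congr rfl fun j _ => ?_
    exact (integral_prod_mul (fun a : ℝ => f a * a ^ (n - 1 - j))
      (fun a : ℝ => f a * a ^ j)).trans (mul_comm _ _)
  -- diagonal is null
  have hdiag : (volume.prod volume) {p : ℝ × ℝ | p.1 = p.2} = 0 := by
    have hm : MeasurableSet {p : ℝ × ℝ | p.1 = p.2} :=
      measurableSet_eq_fun measurable_fst measurable_snd
    rw [Measure.prod_apply hm]
    have hz : ∀ x : ℝ, volume (Prod.mk x ⁻¹' {p : ℝ × ℝ | p.1 = p.2}) = 0 := by
      intro x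
      have : Prod.mk x ⁻¹' {p : ℝ × ℝ | p.1 = p.2} = {x} := by
        ext z; simp [eq_comm]
      rw [this]
      exact measure_singleton x
    simp only [hz]
    simp
  have hae_ne : ∀ᵐ p ∂(volume.prod volume), p.1 ≠ (p.2 : ℝ) := by
    rw [ae_iff]
    convert hdiag using 2
    ext p
    simp [not_not]
  -- second DCT
  have hDCT2 : Tendsto (fun k => ∫ p, (K (u k) p + K (u k) p.swap) ∂(volume.prod volume))
      atTop (nhds (∫ p, Pf p ∂(volume.prod volume))) := by
    refine tendsto_integral_of_dominated_convergence (fun p => ‖Pf p‖) ?_ hPfint.norm ?_ ?_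
    · intro k
      exact ((hKsm (u k)).aestronglyMeasurable.add
        ((hKsm (u k)).comp_measurable measurable_swap).aestronglyMeasurable)
    · intro k
      refine ae_of_all _ fun p => ?_
      rw [hsym _ (hu_pos k) p]
      split_ifs with h
      · exact le_of_eq rfl
      · simp
    · filter_upwards [hae_ne] with p hp
      have hpos : 0 < |p.1 - p.2| := abs_pos.2 (sub_ne_zero.2 hp)
      have hev : ∀ᶠ k in atTop, K (u k) p + K (u k) p.swap = Pf p := by
        filter_upwards [hu_tend0.eventually (gt_mem_nhds hpos)] with k hk
        rw [hsym _ (hu_pos k) p, if_pos hk]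
      exact tendsto_const_nhds.congr' (hev.mono fun k hk => hk.symm)
  -- combine symmetrization with double integral
  have hTsum : ∀ ε : ℝ, 0 < ε →
      (∫ p, (K ε p + K ε p.swap) ∂(volume.prod volume))
        = 2 * ∫ p, K ε p ∂(volume.prod volume) := by
    intro ε hε
    have hswap_int : Integrable (fun p : ℝ × ℝ => K ε p.swap) (volume.prod volume) :=
      (hKint ε hε).swap
    rw [integral_add (hKint ε hε) hswap_int, integral_prod_swap (K ε)]
    ring
  -- relate truncated integrals to the product integral
  have hTk : ∀ k, (∫ y, (1 / Real.pi * φ (u k) y) * g y)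
      = 1 / Real.pi * ∫ p, K (u k) p ∂(volume.prod volume) := by
    intro k
    rw [integral_prod _ (hKint _ (hu_pos k))]
    have : (fun y => ∫ x, K (u k) (y, x)) = fun y => φ (u k) y * g y := by
      funext y; exact hinner _ y
    rw [this, ← integral_const_mul]
    exact integral_congr_ae (ae_of_all _ fun y => by ring)
  -- final limit juggling
  set Smom : ℝ := ∑ j ∈ Finset.range n,
    (∫ x : ℝ, f x * x ^ j) * (∫ y : ℝ, f y * y ^ (n - 1 - j)) with hSmom
  have h2 : Tendsto (fun k => 2 * ∫ p, K (u k) p ∂(volume.prod volume)) atTop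
      (nhds Smom) := by
    have := hDCT2
    simp_rw [fun k => hTsum (u k) (hu_pos k)] at this
    rwa [hPfval] at this
  have h3 : Tendsto (fun k => 1 / Real.pi * ∫ p, K (u k) p ∂(volume.prod volume)) atTop
      (nhds (1 / (2 * Real.pi) * Smom)) := by
    have := h2.const_mul (1 / (2 * Real.pi))
    have heq : (fun k => 1 / (2 * Real.pi) * (2 * ∫ p, K (u k) p ∂(volume.prod volume)))
        = fun k => 1 / Real.pi * ∫ p, K (u k) p ∂(volume.prod volume) := by
      funext k
      field_simp
    rwa [heq] at this
  have h4 : Tendsto (fun k => ∫ y, (1 / Real.pi * φ (u k) y) * g y) atTop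
      (nhds (1 / (2 * Real.pi) * Smom)) := by
    simp_rw [hTk]
    exact h3
  exact tendsto_nhds_unique hDCT1 h4
end

section
/- Let 𝒜 be a unital Banach algebra, p ∈ 𝒜 a projection, and Y ∈ 𝒜. For E ∈ 𝒜 of sufficiently small norm (so that all inverses below exist), define Ψ(E) := (1−E)^{−1} − 1 and E_{pY} := p(1 − (1−E)(1 − (1−pY)E)^{−1})p. Then p(Y·Ψ(E))p, viewed in the corner algebra p𝒜p with unit p, equals Ψ(E_{pY}) computed in p𝒜p, i.e., p·Y·Ψ(E)·p = (p − E_{pY})^{−1}_{p𝒜p} − p where the inverse is taken relative to the unit p. -/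
/-- Algebraic identity for compressions: with `Ψ(E) = (1−E)⁻¹ − 1` and
`E_{pY} = p(1 − (1−E)(1 − (1−pY)E)⁻¹)p`, for `E` of sufficiently small norm one has
`pYΨ(E)p = Ψ(E_{pY})` computed in the corner algebra `p𝒜p` with unit `p`, i.e.
`pYΨ(E)p = (p − E_{pY})⁻¹_{p𝒜p} − p`. -/
theorem corner_psi_identity
    {A : Type*} [NormedRing A] [CompleteSpace A] [NormOneClass A]
    (p : A) (hp : p * p = p) (Y : A) :
    ∃ δ > 0, ∀ E : A, ‖E‖ < δ →
      ∃ W : A, p * W * p = W ∧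
        (p - p * (1 - (1 - E) * Ring.inverse (1 - (1 - p * Y) * E)) * p) * W = p ∧
        W * (p - p * (1 - (1 - E) * Ring.inverse (1 - (1 - p * Y) * E)) * p) = p ∧
        p * (Y * (Ring.inverse (1 - E) - 1)) * p = W - p := by
  refine ⟨min 1 (‖1 - p * Y‖ + 1)⁻¹, lt_min one_pos (by positivity), ?_⟩
  intro E hE
  have hE1 : ‖E‖ < 1 := lt_of_lt_of_le hE (min_le_left _ _)
  have hE' : ‖E‖ < (‖1 - p * Y‖ + 1)⁻¹ := lt_of_lt_of_le hE (min_le_right _ _)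
  have hpos : (0:ℝ) < ‖1 - p * Y‖ + 1 := by positivity
  have hE2 : ‖(1 - p * Y) * E‖ < 1 := by
    calc ‖(1 - p * Y) * E‖ ≤ ‖1 - p * Y‖ * ‖E‖ := norm_mul_le _ _
      _ < 1 := by nlinarith [norm_nonneg E, norm_nonneg (1 - p * Y),
            mul_inv_cancel₀ (ne_of_gt hpos)]
  have hu : IsUnit (1 - E) := by
    simpa using (Units.oneSub E hE1).isUnit
  have hv : IsUnit (1 - (1 - p * Y) * E) := by
    simpa using (Units.oneSub ((1 - p * Y) * E) hE2).isUnit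
  set u := Ring.inverse (1 - E) with hudef
  set v := Ring.inverse (1 - (1 - p * Y) * E) with hvdef
  have h1 : (1 - E) * u = 1 := Ring.mul_inverse_cancel _ hu
  have h2 : u * (1 - E) = 1 := Ring.inverse_mul_cancel _ hu
  have h3 : (1 - (1 - p * Y) * E) * v = 1 := Ring.mul_inverse_cancel _ hv
  have h4 : v * (1 - (1 - p * Y) * E) = 1 := Ring.inverse_mul_cancel _ hv
  set q := p * Y with hqdef
  have hq : p * q = q := by rw [hqdef, ← mul_assoc, hp]
  refine ⟨p + q * (u - 1) * p, ?_, ?_, ?_, ?_⟩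
  · linear_combination (norm := noncomm_ring) hp * p + hp + hq * ((u - 1) * p * p)
      + q * (u - 1) * hp
  · linear_combination (norm := noncomm_ring)
      hp + hq * ((u - 1) * p) - q * E * v * hp - q * E * v * hq * ((u - 1) * p)
      + q * h1 * p - q * E * v * q * h1 * p - q * E * h4 * (u * p) + q * E * v * h1 * p
      + p * h3 * p * (p + q * (u - 1) * p) - hq * (E * v * p) * (p + q * (u - 1) * p)
  · linear_combination (norm := noncomm_ring)
      hp + q * (u - 1) * hp - hq * (E * v * p) - q * (u - 1) * hq * (E * v * p)
      + q * h1 * p - q * h1 * (q * E * v * p) - q * E * u * h3 * p + q * E * h2 * (v * p)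
      + (p + q * (u - 1) * p) * (p * h3 * p) - (p + q * (u - 1) * p) * hq * (E * v * p)
  · rw [hqdef]; noncomm_ring
end

section
/- Let A = (A₁,…,A_n) be a tuple of N×N Hermitian matrices with entries a_{k,ij}, let 1 ≤ M ≤ N, and let σ be a uniformly random N×N permutation matrix. Let Π^{(N,M)} denote (N/M)^{1/2} times the map taking the upper-left M×M minor of each matrix, and ‖B‖²_{M_N(ℂ)ⁿ_sa} := (1/N)Σ_k Tr(B_k B_k*). Then 𝔼_σ ‖Π^{(N,M)}(σAσ^{−1})‖²_{M_M(ℂ)ⁿ_sa} = (1/N)·(N(M−1)/(M(N−1)))·Σ_k Σ_{i≠j} |a_{k,ij}|² + (1/N)·(N/M)·Σ_k Σ_i |a_{k,ii}|², and consequently 𝔼_σ ‖Π^{(N,M)}(σAσ^{−1})‖² ≤ ‖A‖² + (N/M)·‖diag(A)‖². -/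
/-!
The symmetric group acts transitively both on `Fin N` and on the off-diagonal pairs of
`Fin N × Fin N`, and averaging a function over a transitive action of a finite group is the same
as averaging it over the orbit. So under a uniformly random permutation each of the `M` diagonal
entries of the compressed matrix has mean square `(1/N) ∑ |aᵢᵢ|²`, and each of its `M(M-1)`
off-diagonal entries has mean square `(1/(N(N-1))) ∑_{i≠j} |aᵢⱼ|²`; summing gives the identity.
The bound follows from `N(M-1) ≤ M(N-1)`.
-/

open Finset Equiv

theorem Fintype.sum_sum_ite_eq_card_mul_add {β K : Type*} [Fintype β] [DecidableEq β]
    [CommRing K] (a b : K) :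
    ∑ i : β, ∑ j : β, (if i = j then a else b)
      = Fintype.card β * a + Fintype.card β * (Fintype.card β - 1) * b := by
  have row : ∀ i : β, ∑ j : β, (if i = j then a else b) = a + (Fintype.card β - 1) * b := by
    intro i
    rw [sum_ite, filter_eq, filter_ne]
    simp [Nat.cast_sub (Fintype.card_pos_iff.mpr ⟨i⟩)]
  simp [row]
  ring

section OrbitAverage

variable {G X : Type*} [Group G] [Fintype G] [MulAction G X] {s : Finset X} {x : X}

theorem card_smul_sum_smul_eq_card_smul_sum {β : Type*} [AddCommMonoid β]
    (hs : (s : Set X) = MulAction.orbit G x) (f : X → β) :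
    #s • ∑ g : G, f (g • x) = Fintype.card G • ∑ y ∈ s, f y := by
  have hmem : ∀ {y}, y ∈ s ↔ y ∈ MulAction.orbit G x := by
    intro y; rw [← Finset.mem_coe, hs]
  have sum_smul_of_mem : ∀ y ∈ s, ∑ g : G, f (g • y) = ∑ g : G, f (g • x) := by
    intro y hy
    obtain ⟨h, rfl⟩ := hmem.1 hy
    simp only [smul_smul]
    exact Fintype.sum_equiv (Equiv.mulRight h) _ _ fun _ => rfl
  have sum_smul_finset : ∀ g : G, ∑ y ∈ s, f (g • y) = ∑ y ∈ s, f y := by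
    intro g
    refine sum_nbij' (g • ·) (g⁻¹ • ·) ?_ ?_ ?_ ?_ fun _ _ => rfl
    · exact fun y hy => hmem.2 (MulAction.mem_orbit_of_mem_orbit g (hmem.1 hy))
    · exact fun y hy => hmem.2 (MulAction.mem_orbit_of_mem_orbit g⁻¹ (hmem.1 hy))
    · exact fun y _ => inv_smul_smul g y
    · exact fun y _ => smul_inv_smul g y
  calc #s • ∑ g : G, f (g • x) = ∑ y ∈ s, ∑ g : G, f (g • y) := by
        rw [sum_congr rfl sum_smul_of_mem, sum_const]
    _ = ∑ g : G, ∑ y ∈ s, f (g • y) := sum_comm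
    _ = Fintype.card G • ∑ y ∈ s, f y := by
        rw [sum_congr rfl fun g _ => sum_smul_finset g, sum_const, card_univ]

theorem sum_smul_div_card_eq_sum_div_card {K : Type*} [Semifield K] [CharZero K]
    (hs : (s : Set X) = MulAction.orbit G x) (f : X → K) :
    (∑ g : G, f (g • x)) / Fintype.card G = (∑ y ∈ s, f y) / #s := by
  have hx : x ∈ s := by rw [← Finset.mem_coe, hs]; exact MulAction.mem_orbit_self x
  rw [div_eq_div_iff (by simp) (by simpa using Finset.ne_empty_of_mem hx)]
  have := card_smul_sum_smul_eq_card_smul_sum hs f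
  simp only [nsmul_eq_mul] at this
  rw [mul_comm, this, mul_comm]

end OrbitAverage

namespace Equiv.Perm

variable {α K : Type*} [DecidableEq α]

theorem exists_apply_eq_and_apply_eq {i j x y : α} (hij : i ≠ j) (hxy : x ≠ y) :
    ∃ σ : Perm α, σ i = x ∧ σ j = y := by
  refine ⟨swap (swap i x j) y * swap i x, ?_, ?_⟩
  · have hj : swap i x j ≠ x := fun h => hij ((swap i x).injective (by simp [h]))
    simp [Perm.mul_apply, swap_apply_of_ne_of_ne hj.symm hxy]
  · simp [Perm.mul_apply]

variable [Fintype α] [Field K] [CharZero K]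

theorem sum_apply_div_factorial (f : α → K) (i : α) :
    (∑ σ : Perm α, f (σ i)) / (Fintype.card α).factorial = (∑ x, f x) / Fintype.card α := by
  have hs : ((univ : Finset α) : Set α) = MulAction.orbit (Perm α) i := by
    rw [coe_univ, MulAction.orbit_eq_univ]
  simpa [Fintype.card_perm] using sum_smul_div_card_eq_sum_div_card hs f

theorem sum_apply_apply_div_factorial (f : α → α → K) {i j : α} (hij : i ≠ j) :
    (∑ σ : Perm α, f (σ i) (σ j)) / (Fintype.card α).factorial
      = (∑ x, ∑ y, if x ≠ y then f x y else 0)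
          / ((Fintype.card α : K) * (Fintype.card α - 1)) := by
  have hs : ((univ.offDiag : Finset (α × α)) : Set (α × α))
      = MulAction.orbit (Perm α) (i, j) := by
    ext ⟨x, y⟩
    simp only [coe_offDiag, coe_univ, Set.mem_offDiag, Set.mem_univ, true_and,
      MulAction.mem_orbit_iff, Prod.smul_mk, Perm.smul_def, Prod.mk.injEq]
    constructor
    · exact fun hxy => exists_apply_eq_and_apply_eq hij hxy
    · rintro ⟨σ, rfl, rfl⟩
      exact σ.injective.ne hij
  have hoff : (univ.offDiag : Finset (α × α)) = univ.filter fun p => p.1 ≠ p.2 := by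
    ext; simp
  have := sum_smul_div_card_eq_sum_div_card hs (fun p => f p.1 p.2)
  simp only [Fintype.card_perm, Prod.smul_mk, Perm.smul_def] at this
  rw [this, offDiag_card, Nat.cast_sub (Nat.le_mul_self _), hoff, sum_filter,
    Fintype.sum_prod_type, card_univ]
  push_cast
  ring

theorem sum_sum_apply_comp_div_factorial {β : Type*} [Fintype β] [DecidableEq β]
    (f : α → α → K) {ι : β → α} (hι : Function.Injective ι) :
    (∑ σ : Perm α, ∑ i, ∑ j, f (σ (ι i)) (σ (ι j))) / (Fintype.card α).factorial
      = Fintype.card β * (∑ x, f x x) / Fintype.card α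
        + Fintype.card β * (Fintype.card β - 1) * (∑ x, ∑ y, if x ≠ y then f x y else 0)
          / ((Fintype.card α : K) * (Fintype.card α - 1)) := by
  have entry_mean : ∀ i j : β,
      (∑ σ : Perm α, f (σ (ι i)) (σ (ι j))) / (Fintype.card α).factorial
        = if i = j then (∑ x, f x x) / Fintype.card α
          else (∑ x, ∑ y, if x ≠ y then f x y else 0)
            / ((Fintype.card α : K) * (Fintype.card α - 1)) := by
    intro i j
    split_ifs with hij
    · subst hij
      exact sum_apply_div_factorial (fun x => f x x) (ι i)
    · exact sum_apply_apply_div_factorial f (hι.ne hij)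
  have sum_perm_inner : ∑ σ : Perm α, ∑ i, ∑ j, f (σ (ι i)) (σ (ι j))
      = ∑ i, ∑ j, ∑ σ : Perm α, f (σ (ι i)) (σ (ι j)) := by
    rw [sum_comm]; exact sum_congr rfl fun _ _ => sum_comm
  rw [sum_perm_inner, sum_div]
  simp_rw [fun i => sum_div (s := univ) (fun j => ∑ σ : Perm α, f (σ (ι i)) (σ (ι j))),
    entry_mean]
  rw [Fintype.sum_sum_ite_eq_card_mul_add]
  ring

end Equiv.Perm

theorem mean_sum_sq_norm_compression_eq {E : Type*} [Norm E] (n N M : ℕ) (hM : 1 ≤ M)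
    (hMN : M ≤ N) (A : Fin n → Matrix (Fin N) (Fin N) E) :
    ((1 : ℝ) / (Nat.factorial N)) * (∑ σ : Perm (Fin N),
        ((N : ℝ) / M) * ((1 : ℝ) / M) * ∑ k : Fin n, ∑ i : Fin M, ∑ j : Fin M,
          ‖A k (σ⁻¹ (Fin.castLE hMN i)) (σ⁻¹ (Fin.castLE hMN j))‖ ^ 2)
      = ((1 : ℝ) / N) * ((N : ℝ) * ((M : ℝ) - 1) / ((M : ℝ) * ((N : ℝ) - 1))) *
          (∑ k : Fin n, ∑ i : Fin N, ∑ j : Fin N, if i ≠ j then ‖A k i j‖ ^ 2 else 0)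
        + ((1 : ℝ) / N) * ((N : ℝ) / M) * ∑ k : Fin n, ∑ i : Fin N, ‖A k i i‖ ^ 2 := by
  have hM0 : (M : ℝ) ≠ 0 := by positivity
  have hN0 : (N : ℝ) ≠ 0 := Nat.cast_ne_zero.mpr (by omega)
  have inv_reindex : ∀ k, ∑ σ : Perm (Fin N), ∑ i : Fin M, ∑ j : Fin M,
      ‖A k (σ⁻¹ (Fin.castLE hMN i)) (σ⁻¹ (Fin.castLE hMN j))‖ ^ 2
      = ∑ σ : Perm (Fin N), ∑ i : Fin M, ∑ j : Fin M,
      ‖A k (σ (Fin.castLE hMN i)) (σ (Fin.castLE hMN j))‖ ^ 2 :=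
    fun k => Fintype.sum_equiv (Equiv.inv _) _ _ fun _ => rfl
  have entry_sum_mean : ∀ k, (∑ σ : Perm (Fin N), ∑ i : Fin M, ∑ j : Fin M,
      ‖A k (σ (Fin.castLE hMN i)) (σ (Fin.castLE hMN j))‖ ^ 2) / N.factorial
      = M * (∑ x, ‖A k x x‖ ^ 2) / N
        + M * (M - 1) * (∑ x, ∑ y, if x ≠ y then ‖A k x y‖ ^ 2 else 0) / (N * (N - 1)) := by
    intro k
    simpa only [Fintype.card_fin] using
      Perm.sum_sum_apply_comp_div_factorial (fun x y => ‖A k x y‖ ^ 2) (Fin.castLE_injective hMN)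
  calc _ = ((N : ℝ) / M) * ((1 : ℝ) / M) * ∑ k : Fin n,
        ((∑ σ : Perm (Fin N), ∑ i : Fin M, ∑ j : Fin M,
          ‖A k (σ⁻¹ (Fin.castLE hMN i)) (σ⁻¹ (Fin.castLE hMN j))‖ ^ 2) / N.factorial) := by
        rw [← mul_sum, ← sum_div, sum_comm (γ := Fin n)]
        ring
    _ = _ := by
        simp only [inv_reindex, entry_sum_mean, sum_add_distrib, ← mul_sum, ← sum_div]
        field_simp
        ring

theorem expectation_perm_compression_norm_general
    (n N M : ℕ) (hM : 1 ≤ M) (hMN : M ≤ N)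
    (A : Fin n → Matrix (Fin N) (Fin N) ℂ) :
    ((1 : ℝ) / (Nat.factorial N)) * (∑ σ : Equiv.Perm (Fin N),
        ((N : ℝ) / M) * ((1 : ℝ) / M) * ∑ k : Fin n, ∑ i : Fin M, ∑ j : Fin M,
          ‖A k (σ⁻¹ (Fin.castLE hMN i)) (σ⁻¹ (Fin.castLE hMN j))‖ ^ 2)
      = ((1 : ℝ) / N) * ((N : ℝ) * ((M : ℝ) - 1) / ((M : ℝ) * ((N : ℝ) - 1))) *
          (∑ k : Fin n, ∑ i : Fin N, ∑ j : Fin N, if i ≠ j then ‖A k i j‖ ^ 2 else 0)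
        + ((1 : ℝ) / N) * ((N : ℝ) / M) * ∑ k : Fin n, ∑ i : Fin N, ‖A k i i‖ ^ 2
    ∧ ((1 : ℝ) / (Nat.factorial N)) * (∑ σ : Equiv.Perm (Fin N),
        ((N : ℝ) / M) * ((1 : ℝ) / M) * ∑ k : Fin n, ∑ i : Fin M, ∑ j : Fin M,
          ‖A k (σ⁻¹ (Fin.castLE hMN i)) (σ⁻¹ (Fin.castLE hMN j))‖ ^ 2)
      ≤ ((1 : ℝ) / N) * (∑ k : Fin n, ∑ i : Fin N, ∑ j : Fin N, ‖A k i j‖ ^ 2)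
        + ((N : ℝ) / M) *
          (((1 : ℝ) / N) * ∑ k : Fin n, ∑ i : Fin N, ‖A k i i‖ ^ 2) := by
  have mean_eq := mean_sum_sq_norm_compression_eq n N M hM hMN A
  refine ⟨mean_eq, mean_eq ▸ ?_⟩
  set T := ∑ k : Fin n, ∑ i : Fin N, ∑ j : Fin N, if i ≠ j then ‖A k i j‖ ^ 2 else 0
  have hM1 : (1 : ℝ) ≤ M := by exact_mod_cast hM
  have hMN' : (M : ℝ) ≤ N := by exact_mod_cast hMN
  have coeff_le_one : (N : ℝ) * ((M : ℝ) - 1) / ((M : ℝ) * ((N : ℝ) - 1)) ≤ 1 :=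
    div_le_one_of_le₀ (by linarith) (mul_nonneg (by positivity) (by linarith))
  have off_diag_nonneg : 0 ≤ T :=
    sum_nonneg fun k _ => sum_nonneg fun i _ => sum_nonneg fun j _ => by split_ifs <;> positivity
  have off_diag_le : T ≤ ∑ k : Fin n, ∑ i : Fin N, ∑ j : Fin N, ‖A k i j‖ ^ 2 :=
    sum_le_sum fun k _ => sum_le_sum fun i _ => sum_le_sum fun j _ => by split_ifs <;> simp
  have off_diag_term_le : (1 : ℝ) / N * ((N : ℝ) * ((M : ℝ) - 1) / ((M : ℝ) * ((N : ℝ) - 1))) * T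
      ≤ 1 / N * ∑ k : Fin n, ∑ i : Fin N, ∑ j : Fin N, ‖A k i j‖ ^ 2 :=
    calc _ ≤ 1 / N * 1 * T := by gcongr
      _ ≤ _ := by rw [mul_one]; gcongr
  linarith

/-- Average over random permutation conjugation of the normalized Frobenius norm of the
normalized `M × M` compression of a Hermitian tuple: exact identity and the resulting
bound `𝔼‖Π(σAσ⁻¹)‖² ≤ ‖A‖² + (N/M)‖diag A‖²`. -/
theorem expectation_perm_compression_norm
    (n N M : ℕ) (hM : 1 ≤ M) (hMN : M ≤ N)
    (A : Fin n → Matrix (Fin N) (Fin N) ℂ)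
    (hA : ∀ k, (A k).IsHermitian) :
    ((1 : ℝ) / (Nat.factorial N)) * (∑ σ : Equiv.Perm (Fin N),
        ((N : ℝ) / M) * ((1 : ℝ) / M) * ∑ k : Fin n, ∑ i : Fin M, ∑ j : Fin M,
          ‖A k (σ⁻¹ (Fin.castLE hMN i)) (σ⁻¹ (Fin.castLE hMN j))‖ ^ 2)
      = ((1 : ℝ) / N) * ((N : ℝ) * ((M : ℝ) - 1) / ((M : ℝ) * ((N : ℝ) - 1))) *
          (∑ k : Fin n, ∑ i : Fin N, ∑ j : Fin N, if i ≠ j then ‖A k i j‖ ^ 2 else 0)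
        + ((1 : ℝ) / N) * ((N : ℝ) / M) * ∑ k : Fin n, ∑ i : Fin N, ‖A k i i‖ ^ 2
    ∧ ((1 : ℝ) / (Nat.factorial N)) * (∑ σ : Equiv.Perm (Fin N),
        ((N : ℝ) / M) * ((1 : ℝ) / M) * ∑ k : Fin n, ∑ i : Fin M, ∑ j : Fin M,
          ‖A k (σ⁻¹ (Fin.castLE hMN i)) (σ⁻¹ (Fin.castLE hMN j))‖ ^ 2)
      ≤ ((1 : ℝ) / N) * (∑ k : Fin n, ∑ i : Fin N, ∑ j : Fin N, ‖A k i j‖ ^ 2)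
        + ((N : ℝ) / M) *
          (((1 : ℝ) / N) * ∑ k : Fin n, ∑ i : Fin N, ‖A k i i‖ ^ 2) :=
  expectation_perm_compression_norm_general n N M hM hMN A
end

section
/- Let λ : Δ → ℝ be a smooth function on an open domain Δ ⊆ ℝ², with ∂_y λ > 0 and 0 < ∂_s λ < ∂_y λ, and let L(a,b) := log b + log sin(π a/b). If λ satisfies the divergence-form equation ∂_s(∂_y λ · L_a(∂_s λ, ∂_y λ)) + ∂_y(∂_y λ · L_b(∂_s λ, ∂_y λ) − L(∂_s λ, ∂_y λ)) = 0 on Δ, then λ satisfies the Euler–Lagrange equation ∂_s(L_a(∂_s λ, ∂_y λ)) + ∂_y(L_b(∂_s λ, ∂_y λ)) = 0 on Δ. -/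
/-- If `λ` satisfies the divergence-form equation
`∂_s(λ_y L_a) + ∂_y(λ_y L_b − L) = 0` for the Lagrangian
`L(a,b) = log b + log sin(πa/b)`, then it satisfies the Euler–Lagrange equation
`∂_s L_a + ∂_y L_b = 0`. -/
theorem euler_lagrange_of_divergence_form
    (Δ : Set (ℝ × ℝ)) (hΔ : IsOpen Δ)
    (lam : ℝ → ℝ → ℝ)
    (hsmooth : ContDiffOn ℝ (⊤ : ℕ∞) (fun p : ℝ × ℝ => lam p.1 p.2) Δ)
    (lamS lamY : ℝ → ℝ → ℝ)
    (hlamS : ∀ s y, lamS s y = deriv (fun s' => lam s' y) s)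
    (hlamY : ∀ s y, lamY s y = deriv (fun y' => lam s y') y)
    (hpos : ∀ s y, (s, y) ∈ Δ → 0 < lamS s y ∧ lamS s y < lamY s y)
    (L La Lb : ℝ → ℝ → ℝ)
    (hL : ∀ a b, L a b = Real.log b + Real.log (Real.sin (Real.pi * a / b)))
    (hLa : ∀ a b, La a b = (Real.pi / b) * Real.cot (Real.pi * a / b))
    (hLb : ∀ a b, Lb a b = 1 / b - (Real.pi * a / b ^ 2) * Real.cot (Real.pi * a / b))
    (hdiv : ∀ s y, (s, y) ∈ Δ →
      deriv (fun s' => lamY s' y * La (lamS s' y) (lamY s' y)) s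
        + deriv (fun y' =>
            lamY s y' * Lb (lamS s y') (lamY s y') - L (lamS s y') (lamY s y')) y = 0) :
    ∀ s y, (s, y) ∈ Δ →
      deriv (fun s' => La (lamS s' y) (lamY s' y)) s
        + deriv (fun y' => Lb (lamS s y') (lamY s y')) y = 0 := by
  intro s y hsy
  set f : ℝ × ℝ → ℝ := fun p : ℝ × ℝ => lam p.1 p.2 with hfdef
  set F : ℝ × ℝ → (ℝ × ℝ) →L[ℝ] ℝ := fderiv ℝ f with hFdef
  have hfC : ∀ p ∈ Δ, ContDiffAt ℝ (⊤ : ℕ∞) f p := fun p hp =>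
    hsmooth.contDiffAt (hΔ.mem_nhds hp)
  -- f has derivative F near each point of Δ
  have hdf : ∀ p ∈ Δ, HasFDerivAt f (F p) p := fun p hp =>
    ((hfC p hp).differentiableAt (by simp)).hasFDerivAt
  -- lamS and lamY in terms of F on Δ
  have hS : ∀ u v : ℝ, (u, v) ∈ Δ → lamS u v = F (u, v) (1, 0) := by
    intro u v huv
    have hι : HasDerivAt (fun t : ℝ => ((t, v) : ℝ × ℝ)) ((1 : ℝ), (0 : ℝ)) u :=
      (hasDerivAt_id u).prodMk (hasDerivAt_const u v)
    have := (hdf (u, v) huv).comp_hasDerivAt u hι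
    rw [hlamS]
    exact this.deriv
  have hY : ∀ u v : ℝ, (u, v) ∈ Δ → lamY u v = F (u, v) (0, 1) := by
    intro u v huv
    have hι : HasDerivAt (fun t : ℝ => ((u, t) : ℝ × ℝ)) ((0 : ℝ), (1 : ℝ)) v :=
      (hasDerivAt_const v u).prodMk (hasDerivAt_id v)
    have := (hdf (u, v) huv).comp_hasDerivAt v hι
    rw [hlamY]
    exact this.deriv
  -- the second derivative
  have hFdiff : DifferentiableAt ℝ F (s, y) := by
    have : ContDiffAt ℝ 1 F (s, y) := (hfC (s, y) hsy).fderiv_right (by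
      exact WithTop.coe_le_coe.mpr le_top)
    exact this.differentiableAt one_ne_zero
  set F2 : (ℝ × ℝ) →L[ℝ] (ℝ × ℝ) →L[ℝ] ℝ := fderiv ℝ F (s, y) with hF2def
  have hF2 : HasFDerivAt F F2 (s, y) := hFdiff.hasFDerivAt
  have hsymm : ∀ v w : ℝ × ℝ, F2 v w = F2 w v := by
    intro v w
    refine second_derivative_symmetric_of_eventually (f := f) ?_ hF2 v w
    filter_upwards [hΔ.mem_nhds hsy] with p hp using hdf p hp
  -- eventual membership
  have hev_s : ∀ᶠ t in nhds s, ((t, y) : ℝ × ℝ) ∈ Δ := by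
    have hcont : Continuous fun t : ℝ => ((t, y) : ℝ × ℝ) := by fun_prop
    exact hcont.continuousAt.preimage_mem_nhds (by simpa using hΔ.mem_nhds hsy)
  have hev_y : ∀ᶠ t in nhds y, ((s, t) : ℝ × ℝ) ∈ Δ := by
    have hcont : Continuous fun t : ℝ => ((s, t) : ℝ × ℝ) := by fun_prop
    exact hcont.continuousAt.preimage_mem_nhds (by simpa using hΔ.mem_nhds hsy)
  -- derivatives of lamS, lamY in each variable, via F
  have hGv : ∀ v : ℝ × ℝ, HasFDerivAt (fun p => F p v)
      ((ContinuousLinearMap.apply ℝ ℝ v).comp F2) (s, y) := fun v =>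
    (ContinuousLinearMap.apply ℝ ℝ v).hasFDerivAt.comp (s, y) hF2
  have hιs : HasDerivAt (fun t : ℝ => ((t, y) : ℝ × ℝ)) ((1 : ℝ), (0 : ℝ)) s :=
    (hasDerivAt_id s).prodMk (hasDerivAt_const s y)
  have hιy : HasDerivAt (fun t : ℝ => ((s, t) : ℝ × ℝ)) ((0 : ℝ), (1 : ℝ)) y :=
    (hasDerivAt_const y s).prodMk (hasDerivAt_id y)
  have hA_s : HasDerivAt (fun t => lamS t y) (F2 (1, 0) (1, 0)) s := by
    have h1 : HasDerivAt (fun t : ℝ => F (t, y) (1, 0)) (F2 (1, 0) (1, 0)) s := by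
      exact (hGv (1, 0)).comp_hasDerivAt s hιs
    exact h1.congr_of_eventuallyEq <| by
      filter_upwards [hev_s] with t ht using hS t y ht
  have hA_y : HasDerivAt (fun t => lamS s t) (F2 (0, 1) (1, 0)) y := by
    have h1 : HasDerivAt (fun t : ℝ => F (s, t) (1, 0)) (F2 (0, 1) (1, 0)) y := by
      exact (hGv (1, 0)).comp_hasDerivAt y hιy
    exact h1.congr_of_eventuallyEq <| by
      filter_upwards [hev_y] with t ht using hS s t ht
  have hB_s : HasDerivAt (fun t => lamY t y) (F2 (0, 1) (1, 0)) s := by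
    have h1 : HasDerivAt (fun t : ℝ => F (t, y) (0, 1)) (F2 (1, 0) (0, 1)) s := by
      exact (hGv (0, 1)).comp_hasDerivAt s hιs
    rw [← hsymm]
    exact h1.congr_of_eventuallyEq <| by
      filter_upwards [hev_s] with t ht using hY t y ht
  have hB_y : HasDerivAt (fun t => lamY s t) (F2 (0, 1) (0, 1)) y := by
    have h1 : HasDerivAt (fun t : ℝ => F (s, t) (0, 1)) (F2 (0, 1) (0, 1)) y := by
      exact (hGv (0, 1)).comp_hasDerivAt y hιy
    exact h1.congr_of_eventuallyEq <| by
      filter_upwards [hev_y] with t ht using hY s t ht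
  set a0 : ℝ := lamS s y with ha0
  set b0 : ℝ := lamY s y with hb0
  set m : ℝ := F2 (0, 1) (1, 0) with hm
  set byy : ℝ := F2 (0, 1) (0, 1) with hbyy
  obtain ⟨ha0pos, hab⟩ := hpos s y hsy
  have hb0pos : 0 < b0 := ha0pos.trans hab
  have hb0ne : b0 ≠ 0 := ne_of_gt hb0pos
  have hcpos : 0 < Real.pi * a0 / b0 := by positivity
  have hclt : Real.pi * a0 / b0 < Real.pi := by
    rw [mul_div_assoc]
    exact (mul_lt_iff_lt_one_right Real.pi_pos).mpr ((div_lt_one hb0pos).mpr hab)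
  have hsinpos : 0 < Real.sin (Real.pi * a0 / b0) :=
    Real.sin_pos_of_pos_of_lt_pi hcpos hclt
  have hsinne : Real.sin (Real.pi * a0 / b0) ≠ 0 := ne_of_gt hsinpos
  -- inner function u in s direction and y direction
  have hu_s : HasDerivAt (fun t => Real.pi * lamS t y / lamY t y)
      ((Real.pi * F2 (1, 0) (1, 0) * b0 - Real.pi * a0 * m) / b0 ^ 2) s :=
    (hA_s.const_mul Real.pi).div hB_s hb0ne
  have hu_y : HasDerivAt (fun t => Real.pi * lamS s t / lamY s t)
      ((Real.pi * m * b0 - Real.pi * a0 * byy) / b0 ^ 2) y :=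
    (hA_y.const_mul Real.pi).div hB_y hb0ne
  -- differentiability of La-composite in s
  have hLaComp : DifferentiableAt ℝ (fun t => La (lamS t y) (lamY t y)) s := by
    have heq : (fun t => La (lamS t y) (lamY t y))
        = fun t => (Real.pi / lamY t y) *
            (Real.cos (Real.pi * lamS t y / lamY t y) /
              Real.sin (Real.pi * lamS t y / lamY t y)) := by
      funext t; rw [hLa, Real.cot_eq_cos_div_sin]
    rw [heq]
    exact ((differentiableAt_const Real.pi).div hB_s.differentiableAt hb0ne).mul
      ((hu_s.differentiableAt.cos).div (hu_s.differentiableAt.sin) hsinne)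
  -- differentiability of Lb-composite in y
  have hLbComp : DifferentiableAt ℝ (fun t => Lb (lamS s t) (lamY s t)) y := by
    have heq : (fun t => Lb (lamS s t) (lamY s t))
        = fun t => 1 / lamY s t - (Real.pi * lamS s t / (lamY s t) ^ 2) *
            (Real.cos (Real.pi * lamS s t / lamY s t) /
              Real.sin (Real.pi * lamS s t / lamY s t)) := by
      funext t; rw [hLb, Real.cot_eq_cos_div_sin]
    rw [heq]
    have hb2ne : b0 ^ 2 ≠ 0 := pow_ne_zero 2 hb0ne
    exact ((differentiableAt_const 1).div hB_y.differentiableAt hb0ne).sub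
      ((((hA_y.differentiableAt.const_mul Real.pi)).div
          (hB_y.differentiableAt.pow 2) hb2ne).mul
        ((hu_y.differentiableAt.cos).div (hu_y.differentiableAt.sin) hsinne))
  -- derivative of L-composite in y
  have hLComp : HasDerivAt (fun t => L (lamS s t) (lamY s t))
      (m * La a0 b0 + byy * Lb a0 b0) y := by
    have heq : (fun t => L (lamS s t) (lamY s t))
        = fun t => Real.log (lamY s t) +
            Real.log (Real.sin (Real.pi * lamS s t / lamY s t)) := by
      funext t; rw [hL]
    rw [heq]
    have h1 : HasDerivAt (fun t => Real.log (lamY s t)) (byy / b0) y := hB_y.log hb0ne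
    have h2 : HasDerivAt (fun t => Real.sin (Real.pi * lamS s t / lamY s t))
        (Real.cos (Real.pi * a0 / b0) * ((Real.pi * m * b0 - Real.pi * a0 * byy) / b0 ^ 2)) y :=
      hu_y.sin
    have h3 : HasDerivAt (fun t => Real.log (Real.sin (Real.pi * lamS s t / lamY s t)))
        (Real.cos (Real.pi * a0 / b0) * ((Real.pi * m * b0 - Real.pi * a0 * byy) / b0 ^ 2)
          / Real.sin (Real.pi * a0 / b0)) y := h2.log hsinne
    have h4 := h1.add h3
    have heval : byy / b0 +
        Real.cos (Real.pi * a0 / b0) * ((Real.pi * m * b0 - Real.pi * a0 * byy) / b0 ^ 2)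
          / Real.sin (Real.pi * a0 / b0)
        = m * La a0 b0 + byy * Lb a0 b0 := by
      rw [hLa, hLb, Real.cot_eq_cos_div_sin]
      field_simp
      ring
    rwa [heval] at h4
  -- assemble
  set P : ℝ := deriv (fun s' => La (lamS s' y) (lamY s' y)) s with hP
  set Q : ℝ := deriv (fun y' => Lb (lamS s y') (lamY s y')) y with hQ
  have e1 : deriv (fun s' => lamY s' y * La (lamS s' y) (lamY s' y)) s
      = m * La a0 b0 + b0 * P := by
    rw [deriv_fun_mul hB_s.differentiableAt hLaComp, hB_s.deriv]
  have e2 : deriv (fun y' =>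
        lamY s y' * Lb (lamS s y') (lamY s y') - L (lamS s y') (lamY s y')) y
      = (byy * Lb a0 b0 + b0 * Q) - (m * La a0 b0 + byy * Lb a0 b0) := by
    rw [deriv_fun_sub (hB_y.differentiableAt.fun_mul hLbComp) hLComp.differentiableAt,
      deriv_fun_mul hB_y.differentiableAt hLbComp, hB_y.deriv, hLComp.deriv]
  have hdiv' := hdiv s y hsy
  rw [e1, e2] at hdiv'
  have hb0PQ : b0 * (P + Q) = 0 := by ring_nf; ring_nf at hdiv'; linarith
  have := (mul_eq_zero.mp hb0PQ).resolve_left hb0ne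
  linarith
end
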